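/- Let a > 0, b > 0, c ∈ ℝ with b²/4 < c, let k₀, k₁ ∈ ℝ with k₀² + k₁² > 0 and k₀k₁ ≤ 0, and let λ₁(p) = −b/2 − √(b²/4 − c − ap) on ℂ⁺ with the branch Re √ ≥ 0. For G ∈ H² with pG(p) ∈ H², define U(x,p) = e^{λ₁(p)x}(k₀ + k₁λ₁(p))⁻¹G(p). Then U satisfies apU + ∂²U/∂x² + b∂U/∂x + cU = 0 for x > 0, and there is a constant C₅ = C₅(a,b,c,k₀,k₁) such that ∫₀^∞ ‖(∂²U/∂x²)(x,·)‖²_{H²} dx ≤ C₅ (‖G‖²_{H²} + ‖pG(p)‖²_{H²}). -/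

import Mathlib

open MeasureTheory Filter Set Complex ENNReal

noncomputable section

/-- The open right half-plane `ℂ⁺ = {p : Re p > 0}`. -/
def Cplus : Set ℂ := {p : ℂ | 0 < p.re}

/-- The branch of the square root with `Re √z ≥ 0` (principal power `z^(1/2)`). -/
def sqrtB (z : ℂ) : ℂ := z ^ (1/2 : ℂ)

/-- The root `λ₁(p) = -b/2 - √(μ - ap)`, `μ = b²/4 - c`, of `λ² + bλ + (c + ap) = 0`. -/
def lam1 (a b c : ℝ) (p : ℂ) : ℂ :=
  -(b/2 : ℝ) - sqrtB (((b^2/4 - c : ℝ) : ℂ) - (a : ℂ) * p)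

/-- The root `λ₂(p) = -b/2 + √(μ - ap)`, `μ = b²/4 - c`, of `λ² + bλ + (c + ap) = 0`. -/
def lam2 (a b c : ℝ) (p : ℂ) : ℂ :=
  -(b/2 : ℝ) + sqrtB (((b^2/4 - c : ℝ) : ℂ) - (a : ℂ) * p)

/-- Membership in the Hardy space `H^∞` of the right half-plane: holomorphic and
bounded on `ℂ⁺`. -/
def MemHinf (h : ℂ → ℂ) : Prop :=
  DifferentiableOn ℂ h Cplus ∧ ∃ M : ℝ, ∀ p ∈ Cplus, ‖h p‖ ≤ M

/-- The `H²` norm of a function on the right half-plane: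
`‖h‖_{H²} = sup_{k>0} ‖h(k + i·)‖_{L²(ℝ)}` (as an extended nonnegative real). -/
def eH2Norm (h : ℂ → ℂ) : ℝ≥0∞ :=
  ⨆ k ∈ Set.Ioi (0:ℝ), eLpNorm (fun ω : ℝ => h ((k : ℂ) + (ω : ℂ) * I)) 2 volume

/-- Membership in the Hardy space `H²` of the right half-plane. -/
def MemH2 (h : ℂ → ℂ) : Prop :=
  DifferentiableOn ℂ h Cplus ∧ eH2Norm h < ⊤

lemma re_sqrtB_nonneg (z : ℂ) : 0 ≤ (sqrtB z).re := by
  unfold sqrtB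
  rcases eq_or_ne z 0 with h | h
  · simp [h, Complex.zero_cpow (by norm_num : (1/2 : ℂ) ≠ 0)]
  · rw [Complex.cpow_def_of_ne_zero h, Complex.exp_re]
    apply mul_nonneg (Real.exp_nonneg _)
    have him : (Complex.log z * (1/2 : ℂ)).im = z.arg / 2 := by
      simp [Complex.mul_im, Complex.log_im]
      ring
    rw [him]
    apply Real.cos_nonneg_of_mem_Icc
    constructor
    · nlinarith [Complex.neg_pi_lt_arg z, Real.pi_pos]
    · nlinarith [Complex.arg_le_pi z, Real.pi_pos]

lemma norm_sqrtB_le (z : ℂ) : ‖sqrtB z‖ ≤ Real.sqrt ‖z‖ := by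
  unfold sqrtB
  have h := Complex.norm_cpow_le z (1/2 : ℂ)
  rw [Real.sqrt_eq_rpow]
  simpa using h

lemma sq_sqrtB {z : ℂ} (hz : z ≠ 0) : sqrtB z ^ 2 = z := by
  unfold sqrtB
  rw [sq, ← Complex.cpow_add _ _ hz]
  norm_num

lemma zne (a b c : ℝ) (ha : 0 < a) (hmu : b ^ 2 / 4 < c) {p : ℂ} (hp : p ∈ Cplus) :
    (((b^2/4 - c : ℝ) : ℂ) - (a : ℂ) * p) ≠ 0 := by
  intro h
  have h2 := congrArg Complex.re h
  have hp' : 0 < p.re := hp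
  rw [Complex.sub_re, Complex.ofReal_re, Complex.mul_re, Complex.ofReal_re,
    Complex.ofReal_im, Complex.zero_re] at h2
  simp only [zero_mul, sub_zero] at h2
  nlinarith

lemma lam1_quad (a b c : ℝ) (ha : 0 < a) (hmu : b ^ 2 / 4 < c) {p : ℂ} (hp : p ∈ Cplus) :
    lam1 a b c p ^ 2 + (b:ℂ) * lam1 a b c p + (c:ℂ) + (a:ℂ) * p = 0 := by
  have hs := sq_sqrtB (zne a b c ha hmu hp)
  unfold lam1
  push_cast at hs ⊢
  linear_combination hs

lemma re_lam1_le (a b c : ℝ) (p : ℂ) : (lam1 a b c p).re ≤ -(b/2) := by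
  unfold lam1
  have := re_sqrtB_nonneg (((b^2/4 - c : ℝ) : ℂ) - (a : ℂ) * p)
  rw [Complex.sub_re, Complex.neg_re, Complex.ofReal_re]
  linarith

lemma norm_lam1_le (a b c : ℝ) (ha : 0 < a) (hb : 0 < b) (p : ℂ) :
    ‖lam1 a b c p‖ ≤ (b/2 + (1 + |b^2/4 - c|)/2) + (a/2) * ‖p‖ := by
  unfold lam1
  set z := (((b^2/4 - c : ℝ) : ℂ) - (a : ℂ) * p) with hzdef
  have h1 : ‖(-(b/2 : ℝ) : ℂ) - sqrtB z‖ ≤ b/2 + ‖sqrtB z‖ := by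
    refine (norm_sub_le _ _).trans ?_
    rw [norm_neg, Complex.norm_real, Real.norm_eq_abs,
      abs_of_pos (by linarith : (0:ℝ) < b/2)]
  have h2 : ‖z‖ ≤ |b^2/4 - c| + a * ‖p‖ := by
    refine (norm_sub_le _ _).trans ?_
    rw [Complex.norm_real, Real.norm_eq_abs, norm_mul,
      Complex.norm_real, Real.norm_eq_abs, abs_of_pos ha]
  have h3 : ‖sqrtB z‖ ≤ Real.sqrt ‖z‖ := norm_sqrtB_le z
  have h4 : Real.sqrt ‖z‖ ≤ (1 + ‖z‖) / 2 := by
    nlinarith [Real.sq_sqrt (norm_nonneg z), Real.sqrt_nonneg ‖z‖,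
      sq_nonneg (Real.sqrt ‖z‖ - 1)]
  calc ‖(-(b/2 : ℝ) : ℂ) - sqrtB z‖ ≤ b/2 + ‖sqrtB z‖ := h1
    _ ≤ _ := by linarith

lemma K_lb (a b c k0 k1 : ℝ) (hb : 0 < b) (hkk : k0 * k1 ≤ 0) (p : ℂ) :
    (if k1 = 0 then |k0| else |k1| * (b/2)) ≤ ‖(k0 : ℂ) + (k1 : ℂ) * lam1 a b c p‖ := by
  set r := (lam1 a b c p).re with hr
  have hre : ((k0 : ℂ) + (k1 : ℂ) * lam1 a b c p).re = k0 + k1 * r := by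
    simp [Complex.add_re, Complex.mul_re, hr]
  have habs : |k0 + k1 * r| ≤ ‖(k0 : ℂ) + (k1 : ℂ) * lam1 a b c p‖ := by
    rw [← hre]
    exact Complex.abs_re_le_norm _
  have hrb : r ≤ -(b/2) := re_lam1_le a b c p
  refine le_trans ?_ habs
  by_cases h1 : k1 = 0
  · simp [h1]
  · simp only [h1, if_false]
    rcases lt_or_gt_of_ne h1 with hneg | hpos
    · have hk0 : 0 ≤ k0 := by nlinarith
      rw [abs_of_neg hneg]
      have : -k1 * (b/2) ≤ k0 + k1 * r := by nlinarith
      exact le_trans this (le_abs_self _)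
    · have hk0 : k0 ≤ 0 := by nlinarith
      rw [abs_of_pos hpos]
      have : k0 + k1 * r ≤ -(k1 * (b/2)) := by nlinarith
      refine le_abs.2 (Or.inr ?_)
      linarith

lemma K_lb_pos (b k0 k1 : ℝ) (hb : 0 < b) (hk : 0 < k0 ^ 2 + k1 ^ 2) :
    0 < (if k1 = 0 then |k0| else |k1| * (b/2)) := by
  by_cases h1 : k1 = 0
  · subst h1; simp only [if_true]
    have : k0 ≠ 0 := by intro h; rw [h] at hk; simp at hk
    exact abs_pos.2 this
  · simp only [h1, if_false]
    have := abs_pos.2 h1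
    positivity

lemma deriv1 (lam C1 C2 : ℂ) (x : ℝ) :
    HasDerivAt (fun y : ℝ => Complex.exp (lam * (y : ℂ)) * C1 * C2)
      (lam * (Complex.exp (lam * (x : ℂ)) * C1 * C2)) x := by
  have h0 : HasDerivAt (fun y : ℝ => lam * (y : ℂ)) lam x := by
    simpa using (Complex.ofRealCLM.hasDerivAt (x := x)).const_mul lam
  have h1 := ((h0.cexp).mul_const C1).mul_const C2
  convert h1 using 1
  · rfl
  · ring

lemma deriv2 (lam C1 C2 : ℂ) (x : ℝ) :
    HasDerivAt (fun y : ℝ => lam * (Complex.exp (lam * (y : ℂ)) * C1 * C2))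
      (lam ^ 2 * (Complex.exp (lam * (x : ℂ)) * C1 * C2)) x := by
  have h1 := (deriv1 lam C1 C2 x).const_mul lam
  convert h1 using 1
  · rfl
  · ring

set_option maxHeartbeats 1000000 in
/-- `U(x,p) = e^{λ₁(p)x}(k₀ + k₁λ₁(p))⁻¹G(p)` satisfies the ODE
`apU + ∂²U/∂x² + b∂U/∂x + cU = 0` for `x > 0` (with `∂U/∂x = λ₁U`, `∂²U/∂x² = λ₁²U`),
and `∫₀^∞ ‖(∂²U/∂x²)(x,·)‖²_{H²} dx ≤ C₅(‖G‖²_{H²} + ‖pG‖²_{H²})`. -/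
theorem frequency_solution_second_deriv_bound
    (a b c k0 k1 : ℝ) (ha : 0 < a) (hb : 0 < b) (hmu : b ^ 2 / 4 < c)
    (hk : 0 < k0 ^ 2 + k1 ^ 2) (hkk : k0 * k1 ≤ 0) :
    ∃ C5 : ℝ, 0 ≤ C5 ∧ ∀ G : ℂ → ℂ, MemH2 G → MemH2 (fun p => p * G p) →
      (∀ p ∈ Cplus, ∀ x : ℝ,
        (HasDerivAt (fun y : ℝ => Complex.exp (lam1 a b c p * (y : ℂ)) *
            ((k0 : ℂ) + (k1 : ℂ) * lam1 a b c p)⁻¹ * G p)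
          (lam1 a b c p * (Complex.exp (lam1 a b c p * (x : ℂ)) *
            ((k0 : ℂ) + (k1 : ℂ) * lam1 a b c p)⁻¹ * G p)) x) ∧
        (HasDerivAt (fun y : ℝ => lam1 a b c p * (Complex.exp (lam1 a b c p * (y : ℂ)) *
            ((k0 : ℂ) + (k1 : ℂ) * lam1 a b c p)⁻¹ * G p))
          (lam1 a b c p ^ 2 * (Complex.exp (lam1 a b c p * (x : ℂ)) *
            ((k0 : ℂ) + (k1 : ℂ) * lam1 a b c p)⁻¹ * G p)) x) ∧
        (0 < x →
          (a : ℂ) * p * (Complex.exp (lam1 a b c p * (x : ℂ)) *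
              ((k0 : ℂ) + (k1 : ℂ) * lam1 a b c p)⁻¹ * G p) +
            lam1 a b c p ^ 2 * (Complex.exp (lam1 a b c p * (x : ℂ)) *
              ((k0 : ℂ) + (k1 : ℂ) * lam1 a b c p)⁻¹ * G p) +
            (b : ℂ) * (lam1 a b c p * (Complex.exp (lam1 a b c p * (x : ℂ)) *
              ((k0 : ℂ) + (k1 : ℂ) * lam1 a b c p)⁻¹ * G p)) +
            (c : ℂ) * (Complex.exp (lam1 a b c p * (x : ℂ)) *
              ((k0 : ℂ) + (k1 : ℂ) * lam1 a b c p)⁻¹ * G p) = 0)) ∧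
      ∫⁻ x in Set.Ioi (0:ℝ),
          (eH2Norm (fun p => lam1 a b c p ^ 2 * (Complex.exp (lam1 a b c p * (x : ℂ)) *
            ((k0 : ℂ) + (k1 : ℂ) * lam1 a b c p)⁻¹ * G p))) ^ 2 ≤
        ENNReal.ofReal C5 *
          ((eH2Norm G) ^ 2 + (eH2Norm (fun p => p * G p)) ^ 2) := by
  classical
  obtain ⟨δ, hδdef⟩ : ∃ t : ℝ, t = (if k1 = 0 then |k0| else |k1| * (b/2)) := ⟨_, rfl⟩
  have hδpos : 0 < δ := hδdef ▸ K_lb_pos b k0 k1 hb hk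
  obtain ⟨L, hLdef⟩ : ∃ t : ℝ, t = b/2 + (1 + |b^2/4 - c|)/2 := ⟨_, rfl⟩
  have hLpos : 0 < L := by rw [hLdef]; positivity
  obtain ⟨E, hEdef⟩ : ∃ t : ℝ, t = (b*L + |c|) + (a*b/2 + a) := ⟨_, rfl⟩
  have hEpos : 0 < E := by rw [hEdef]; positivity
  obtain ⟨D, hDdef⟩ : ∃ t : ℝ, t = E / δ := ⟨_, rfl⟩
  have hDpos : 0 < D := by rw [hDdef]; positivity
  refine ⟨4 * (D^2 * b⁻¹), by positivity, ?_⟩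
  intro G hG hpG
  -- norm bound on lam1^2
  have hlamsq : ∀ p ∈ Cplus, ‖lam1 a b c p ^ 2‖ ≤ E * (1 + ‖p‖) := by
    intro p hp
    have hq := lam1_quad a b c ha hmu hp
    have h1 : lam1 a b c p ^ 2 = -((b:ℂ) * lam1 a b c p + (c:ℂ) + (a:ℂ)*p) := by
      linear_combination hq
    rw [h1, norm_neg]
    have hbl : ‖(b:ℂ) * lam1 a b c p‖ = b * ‖lam1 a b c p‖ := by
      rw [norm_mul, Complex.norm_real, Real.norm_eq_abs, abs_of_pos hb]
    have hcn : ‖(c:ℂ)‖ = |c| := by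
      rw [Complex.norm_real, Real.norm_eq_abs]
    have hap : ‖(a:ℂ) * p‖ = a * ‖p‖ := by
      rw [norm_mul, Complex.norm_real, Real.norm_eq_abs, abs_of_pos ha]
    have hl : ‖lam1 a b c p‖ ≤ L + a/2 * ‖p‖ := by
      rw [hLdef]; exact norm_lam1_le a b c ha hb p
    have hpn : 0 ≤ ‖p‖ := norm_nonneg _
    calc ‖(b:ℂ) * lam1 a b c p + (c:ℂ) + (a:ℂ)*p‖
        ≤ ‖(b:ℂ) * lam1 a b c p‖ + ‖(c:ℂ)‖ + ‖(a:ℂ)*p‖ :=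
          (norm_add_le _ _).trans (by gcongr; exact norm_add_le _ _)
      _ ≤ E * (1 + ‖p‖) := by
          rw [hbl, hcn, hap]
          have h5 : b * ‖lam1 a b c p‖ ≤ b * (L + a/2 * ‖p‖) :=
            mul_le_mul_of_nonneg_left hl hb.le
          have h6 : (0:ℝ) ≤ (b*L + |c|) * ‖p‖ := by positivity
          have h7 : (0:ℝ) < a * b := mul_pos ha hb
          rw [hEdef]
          nlinarith
  -- pointwise bound
  have ptb : ∀ p ∈ Cplus, ∀ x : ℝ, 0 ≤ x →
      ‖lam1 a b c p ^ 2 * (Complex.exp (lam1 a b c p * (x : ℂ)) *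
        ((k0 : ℂ) + (k1 : ℂ) * lam1 a b c p)⁻¹ * G p)‖ ≤
      (D * Real.exp (-(b/2) * x)) * (‖G p‖ + ‖p * G p‖) := by
    intro p hp x hx
    have hexp : ‖Complex.exp (lam1 a b c p * (x : ℂ))‖ ≤ Real.exp (-(b/2) * x) := by
      rw [Complex.norm_exp]
      apply Real.exp_le_exp.2
      have hre : (lam1 a b c p * (x : ℂ)).re = (lam1 a b c p).re * x := by
        simp [Complex.mul_re]
      rw [hre]
      exact mul_le_mul_of_nonneg_right (re_lam1_le a b c p) hx
    have hKinv : ‖((k0 : ℂ) + (k1 : ℂ) * lam1 a b c p)⁻¹‖ ≤ δ⁻¹ := by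
      rw [norm_inv]
      exact inv_anti₀ hδpos (hδdef ▸ K_lb a b c k0 k1 hb hkk p)
    have step : ‖lam1 a b c p ^ 2 * (Complex.exp (lam1 a b c p * (x : ℂ)) *
        ((k0 : ℂ) + (k1 : ℂ) * lam1 a b c p)⁻¹ * G p)‖ ≤
        (E * (1 + ‖p‖)) * (Real.exp (-(b/2) * x) * (δ⁻¹ * ‖G p‖)) := by
      rw [norm_mul, norm_mul, norm_mul]
      have h1 : ‖Complex.exp (lam1 a b c p * (x : ℂ))‖ *
          ‖((k0 : ℂ) + (k1 : ℂ) * lam1 a b c p)⁻¹‖ ≤ Real.exp (-(b/2) * x) * δ⁻¹ :=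
        mul_le_mul hexp hKinv (norm_nonneg _) (Real.exp_nonneg _)
      have h2 := mul_le_mul_of_nonneg_right h1 (norm_nonneg (G p))
      calc ‖lam1 a b c p ^ 2‖ * (‖Complex.exp (lam1 a b c p * (x : ℂ))‖ *
            ‖((k0 : ℂ) + (k1 : ℂ) * lam1 a b c p)⁻¹‖ * ‖G p‖)
          ≤ (E * (1 + ‖p‖)) * (Real.exp (-(b/2) * x) * δ⁻¹ * ‖G p‖) :=
            mul_le_mul (hlamsq p hp) h2 (by positivity) (by positivity)
        _ = (E * (1 + ‖p‖)) * (Real.exp (-(b/2) * x) * (δ⁻¹ * ‖G p‖)) := by ring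
    refine step.trans (le_of_eq ?_)
    rw [norm_mul]
    rw [hDdef]
    field_simp
  have hGc := hG.1.continuousOn
  have hpGc := hpG.1.continuousOn
  set S := eH2Norm G + eH2Norm (fun p => p * G p) with hSdef
  -- H2 bound for each x ≥ 0
  have hxk : ∀ x : ℝ, 0 ≤ x →
      eH2Norm (fun p => lam1 a b c p ^ 2 * (Complex.exp (lam1 a b c p * (x : ℂ)) *
        ((k0 : ℂ) + (k1 : ℂ) * lam1 a b c p)⁻¹ * G p)) ≤
      ENNReal.ofReal (D * Real.exp (-(b/2) * x)) * S := by
    intro x hx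
    set M := D * Real.exp (-(b/2) * x) with hMdef
    have hM : 0 ≤ M := by positivity
    refine iSup₂_le fun k hk' => ?_
    have hk0' : (0:ℝ) < k := hk'
    set q : ℝ → ℂ := fun ω => (k : ℂ) + (ω : ℂ) * I with hqdef
    have hqc : Continuous q := by
      unfold q; continuity
    have hqmem : ∀ ω, q ω ∈ Cplus := by
      intro ω
      show (0:ℝ) < (q ω).re
      simp [hqdef, Complex.add_re, Complex.mul_re]
      exact hk0'
    have hGk : Continuous fun ω => G (q ω) := hGc.comp_continuous hqc hqmem
    have hpGk : Continuous fun ω => (q ω) * G (q ω) :=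
      hpGc.comp_continuous hqc hqmem
    have hpt : ∀ ω : ℝ, ‖lam1 a b c (q ω) ^ 2 * (Complex.exp (lam1 a b c (q ω) * (x : ℂ)) *
        ((k0 : ℂ) + (k1 : ℂ) * lam1 a b c (q ω))⁻¹ * G (q ω))‖ ≤
        ‖M * ‖G (q ω)‖ + M * ‖q ω * G (q ω)‖‖ := by
      intro ω
      rw [Real.norm_eq_abs, _root_.abs_of_nonneg (by positivity)]
      have h := ptb (q ω) (hqmem ω) x hx
      calc _ ≤ M * (‖G (q ω)‖ + ‖q ω * G (q ω)‖) := h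
        _ = M * ‖G (q ω)‖ + M * ‖q ω * G (q ω)‖ := by ring
    have hsmul1 : eLpNorm (fun ω => M * ‖G (q ω)‖) 2 volume =
        ENNReal.ofReal M * eLpNorm (fun ω => G (q ω)) 2 volume := by
      rw [show (fun ω => M * ‖G (q ω)‖) = M • (fun ω => ‖G (q ω)‖) from rfl,
        eLpNorm_const_smul, eLpNorm_norm, Real.enorm_eq_ofReal hM]
    have hsmul2 : eLpNorm (fun ω => M * ‖q ω * G (q ω)‖) 2 volume =
        ENNReal.ofReal M * eLpNorm (fun ω => q ω * G (q ω)) 2 volume := by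
      rw [show (fun ω => M * ‖q ω * G (q ω)‖) = M • (fun ω => ‖q ω * G (q ω)‖) from rfl,
        eLpNorm_const_smul, eLpNorm_norm, Real.enorm_eq_ofReal hM]
    have hle1 : eLpNorm (fun ω => G (q ω)) 2 volume ≤ eH2Norm G :=
      le_iSup₂ (f := fun k (_ : k ∈ Set.Ioi (0:ℝ)) =>
        eLpNorm (fun ω : ℝ => G ((k : ℂ) + (ω : ℂ) * I)) 2 volume) k hk'
    have hle2 : eLpNorm (fun ω => q ω * G (q ω)) 2 volume ≤
        eH2Norm (fun p => p * G p) :=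
      le_iSup₂ (f := fun k (_ : k ∈ Set.Ioi (0:ℝ)) =>
        eLpNorm (fun ω : ℝ => ((k : ℂ) + (ω : ℂ) * I) * G ((k : ℂ) + (ω : ℂ) * I)) 2 volume)
        k hk'
    calc eLpNorm (fun ω : ℝ => lam1 a b c (q ω) ^ 2 *
          (Complex.exp (lam1 a b c (q ω) * (x : ℂ)) *
          ((k0 : ℂ) + (k1 : ℂ) * lam1 a b c (q ω))⁻¹ * G (q ω))) 2 volume
        ≤ eLpNorm (fun ω => M * ‖G (q ω)‖ + M * ‖q ω * G (q ω)‖) 2 volume :=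
          eLpNorm_mono hpt
      _ ≤ eLpNorm (fun ω => M * ‖G (q ω)‖) 2 volume +
          eLpNorm (fun ω => M * ‖q ω * G (q ω)‖) 2 volume :=
          eLpNorm_add_le ((continuous_const.mul hGk.norm).aestronglyMeasurable)
            ((continuous_const.mul hpGk.norm).aestronglyMeasurable) one_le_two
      _ = ENNReal.ofReal M * eLpNorm (fun ω => G (q ω)) 2 volume +
          ENNReal.ofReal M * eLpNorm (fun ω => q ω * G (q ω)) 2 volume := by
          rw [hsmul1, hsmul2]
      _ ≤ ENNReal.ofReal M * eH2Norm G +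
          ENNReal.ofReal M * eH2Norm (fun p => p * G p) := by
          gcongr
      _ = ENNReal.ofReal M * S := by rw [hSdef, mul_add]
  refine ⟨fun p hp x => ⟨deriv1 _ _ _ x, deriv2 _ _ _ x, fun _ => ?_⟩, ?_⟩
  · have hq := lam1_quad a b c ha hmu hp
    linear_combination (Complex.exp (lam1 a b c p * (x : ℂ)) *
      ((k0 : ℂ) + (k1 : ℂ) * lam1 a b c p)⁻¹ * G p) * hq
  -- the integral bound
  · have key : ∀ x ∈ Set.Ioi (0:ℝ),
        (eH2Norm (fun p => lam1 a b c p ^ 2 * (Complex.exp (lam1 a b c p * (x : ℂ)) *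
          ((k0 : ℂ) + (k1 : ℂ) * lam1 a b c p)⁻¹ * G p))) ^ 2 ≤
        ENNReal.ofReal (D^2 * Real.exp (-b * x)) * S^2 := by
      intro x hx
      have h := hxk x (le_of_lt hx)
      have hM : 0 ≤ D * Real.exp (-(b/2) * x) := by positivity
      calc (eH2Norm (fun p => lam1 a b c p ^ 2 * (Complex.exp (lam1 a b c p * (x : ℂ)) *
            ((k0 : ℂ) + (k1 : ℂ) * lam1 a b c p)⁻¹ * G p))) ^ 2
          ≤ (ENNReal.ofReal (D * Real.exp (-(b/2) * x)) * S) ^ 2 := by gcongr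
        _ = ENNReal.ofReal (D * Real.exp (-(b/2) * x)) ^ 2 * S ^ 2 := by rw [mul_pow]
        _ = ENNReal.ofReal (D^2 * Real.exp (-b * x)) * S ^ 2 := by
            rw [← ENNReal.ofReal_pow hM]
            congr 2
            have hexp2 : Real.exp (-(b/2) * x) ^ 2 = Real.exp (-b * x) := by
              rw [sq, ← Real.exp_add]
              ring_nf
            rw [mul_pow, hexp2]
    have hcont : Continuous fun x : ℝ => D^2 * Real.exp (-b * x) :=
      continuous_const.mul (Real.continuous_exp.comp (continuous_const.mul continuous_id))
    have hmeas : Measurable fun x : ℝ =>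
        ENNReal.ofReal (D^2 * Real.exp (-b * x)) * S^2 := by
      exact (ENNReal.measurable_ofReal.comp hcont.measurable).mul_const _
    have hint : ∫⁻ x in Set.Ioi (0:ℝ), ENNReal.ofReal (D^2 * Real.exp (-b * x)) =
        ENNReal.ofReal (D^2 * b⁻¹) := by
      rw [← ofReal_integral_eq_lintegral_ofReal
        ((exp_neg_integrableOn_Ioi 0 hb).const_mul (D^2))
        (Filter.Eventually.of_forall fun x => by positivity)]
      congr 1
      rw [MeasureTheory.integral_const_mul]
      congr 1
      have h := integral_comp_mul_left_Ioi (fun y => Real.exp (-y)) 0 hb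
      simp only [mul_zero, integral_exp_neg_Ioi, neg_zero, Real.exp_zero, smul_eq_mul,
        mul_one] at h
      rw [← h]
      congr 1
      funext x
      ring_nf
    have hSsq : S^2 ≤ 4 * ((eH2Norm G)^2 + (eH2Norm (fun p => p * G p))^2) := by
      set A := eH2Norm G
      set B := eH2Norm (fun p => p * G p)
      rcases le_total A B with hAB | hAB
      · calc S^2 = (A + B)^2 := by rw [hSdef]
          _ ≤ (B + B)^2 := by gcongr
          _ = 4 * B^2 := by ring
          _ ≤ 4 * (A^2 + B^2) := by gcongr; exact le_add_self
      · calc S^2 = (A + B)^2 := by rw [hSdef]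
          _ ≤ (A + A)^2 := by gcongr
          _ = 4 * A^2 := by ring
          _ ≤ 4 * (A^2 + B^2) := by gcongr; exact le_self_add
    calc ∫⁻ x in Set.Ioi (0:ℝ),
          (eH2Norm (fun p => lam1 a b c p ^ 2 * (Complex.exp (lam1 a b c p * (x : ℂ)) *
            ((k0 : ℂ) + (k1 : ℂ) * lam1 a b c p)⁻¹ * G p))) ^ 2
        ≤ ∫⁻ x in Set.Ioi (0:ℝ), ENNReal.ofReal (D^2 * Real.exp (-b * x)) * S^2 :=
          setLIntegral_mono hmeas key
      _ = (∫⁻ x in Set.Ioi (0:ℝ), ENNReal.ofReal (D^2 * Real.exp (-b * x))) * S^2 :=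
          lintegral_mul_const _ (ENNReal.measurable_ofReal.comp hcont.measurable)
      _ = ENNReal.ofReal (D^2 * b⁻¹) * S^2 := by rw [hint]
      _ ≤ ENNReal.ofReal (D^2 * b⁻¹) *
          (4 * ((eH2Norm G)^2 + (eH2Norm (fun p => p * G p))^2)) := by gcongr
      _ = ENNReal.ofReal (4 * (D^2 * b⁻¹)) *
          ((eH2Norm G)^2 + (eH2Norm (fun p => p * G p))^2) := by
          rw [ENNReal.ofReal_mul (by norm_num : (0:ℝ) ≤ 4)]
          rw [ENNReal.ofReal_ofNat]
          ring
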